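/- Let N ≥ 2 be an integer and s ∈ (0,1) with N > 2s. Then the kernel K satisfies: K(t) = K(-t) and K(t) > 0 for every t ≠ 0; moreover there exist constants 0 < c₁ ≤ c₂ such that c₁ |t|^{-(1+2s)} ≤ K(t) ≤ c₂ |t|^{-(1+2s)} for every t with 0 < |t| ≤ 1, and c₁ e^{-|t|(N+2s)/2} ≤ K(t) ≤ c₂ e^{-|t|(N+2s)/2} for every t with |t| ≥ 1. -/

import Mathlib

open MeasureTheory Filter Set Real

/-- The kernel `K(t) = e^{-t(N+2s)/2} ∫_{S^{N-1}} (1 + e^{-2t} - 2e^{-t}⟨θ,σ⟩)^{-(N+2s)/2} dσ`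
appearing after the Emden–Fowler reduction, where the integral is taken over the unit
sphere of `ℝ^N` with its surface measure and `θ` is a fixed unit vector. -/
noncomputable def henonKernel (N : ℕ) (s : ℝ) (θ : EuclideanSpace ℝ (Fin N)) (t : ℝ) : ℝ :=
  Real.exp (-t * ((N : ℝ) + 2 * s) / 2) *
    ∫ σ : Metric.sphere (0 : EuclideanSpace ℝ (Fin N)) 1,
      (1 + Real.exp (-2 * t) - 2 * Real.exp (-t) *
          (inner ℝ θ (σ : EuclideanSpace ℝ (Fin N)) : ℝ)) ^ (-((N : ℝ) + 2 * s) / 2)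
      ∂((volume : Measure (EuclideanSpace ℝ (Fin N))).toSphere)

/-!
Put `r = e^{-t}`. On the unit sphere `1 + r² - 2r⟪θ, σ⟫ = ‖θ - rσ‖²`, so
`K(t) = e^{-t(N+2s)/2} I(r)` with `I(r) = ∫_{S^{N-1}} ‖θ - rσ‖^{-(N+2s)} dσ`. Evenness is the
inversion identity `I(1/r) = r^{N+2s} I(r)`, which holds because `‖rθ - σ‖ = ‖θ - rσ‖` for unit
vectors. Since `1 - r ≤ ‖θ - rσ‖ ≤ 1 + r`, `I(r)` is comparable to a constant for `r ≤ e^{-1}`,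
which gives positivity and the exponential decay.

As `r → 1`, integrate over the annulus `r < ‖x‖ ≤ 1` in polar coordinates: the integral of
`‖θ - r x/‖x‖‖^{-(N+2s)}` over it is `I(r) ∫_r^1 ρ^{N-1} dρ ≈ (1 - r) I(r)`. On the annulus
`‖θ - r x/‖x‖‖` is comparable to `(1 - r) + ‖x - θ‖`, whose `-(N+2s)`-th power integrates by
scaling to a multiple of `(1 - r)^{-2s}` over `ℝ^N`, and to at least that order over the ball of
radius `(1 - r)/4` around `(1 - (1 - r)/2) θ`, which lies in the annulus. Hence
`I(r) ≍ (1 - r)^{-(1+2s)} ≍ t^{-(1+2s)}`.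
-/

open Metric Module

section Norm

variable {E : Type*} [NormedAddCommGroup E] [NormedSpace ℝ E]

theorem one_sub_le_norm_sub_smul {θ σ : E} (hθ : ‖θ‖ = 1) (hσ : ‖σ‖ = 1) {r : ℝ} (hr : 0 ≤ r) :
    1 - r ≤ ‖θ - r • σ‖ := by
  simpa [norm_smul, hθ, hσ, abs_of_nonneg hr] using norm_sub_norm_le θ (r • σ)

theorem norm_sub_smul_le_one_add {θ σ : E} (hθ : ‖θ‖ = 1) (hσ : ‖σ‖ = 1) {r : ℝ} (hr : 0 ≤ r) :
    ‖θ - r • σ‖ ≤ 1 + r := by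
  simpa [norm_smul, hθ, hσ, abs_of_nonneg hr] using norm_sub_le θ (r • σ)

theorem norm_sub_smul_normalize {x : E} {r : ℝ} (hx : r ≤ ‖x‖) (hx0 : x ≠ 0) :
    ‖x - r • (‖x‖⁻¹ • x)‖ = ‖x‖ - r := by
  have hx' : 0 < ‖x‖ := norm_pos_iff.mpr hx0
  have hc : 0 ≤ 1 - r * ‖x‖⁻¹ := by rwa [sub_nonneg, ← div_eq_mul_inv, div_le_one hx']
  rw [smul_smul, show x - (r * ‖x‖⁻¹) • x = (1 - r * ‖x‖⁻¹) • x by rw [sub_smul, one_smul]]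
  rw [norm_smul, norm_of_nonneg hc, sub_mul, one_mul, mul_assoc, inv_mul_cancel₀ hx'.ne',
    mul_one]

theorem norm_sub_smul_normalize_comparable {θ x : E} (hθ : ‖θ‖ = 1) {r : ℝ} (hr : 0 ≤ r)
    (hx : ‖x‖ ∈ Ioc r 1) :
    ‖θ - r • (‖x‖⁻¹ • x)‖ ≤ (1 - r) + ‖x - θ‖ ∧
      (1 - r) + ‖x - θ‖ ≤ 3 * ‖θ - r • (‖x‖⁻¹ • x)‖ := by
  have hx0 : x ≠ 0 := norm_pos_iff.mp (hr.trans_lt hx.1)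
  have hgap := norm_sub_smul_normalize hx.1.le hx0
  have hunit : ‖‖x‖⁻¹ • x‖ = 1 := by
    rw [norm_smul, norm_inv, norm_norm, inv_mul_cancel₀ (norm_ne_zero_iff.mpr hx0)]
  have hfar := one_sub_le_norm_sub_smul hθ hunit hr
  constructor
  · calc ‖θ - r • (‖x‖⁻¹ • x)‖ ≤ ‖θ - x‖ + ‖x - r • (‖x‖⁻¹ • x)‖ :=
          norm_sub_le_norm_sub_add_norm_sub _ _ _
      _ ≤ (1 - r) + ‖x - θ‖ := by rw [norm_sub_rev, hgap]; linarith [hx.2]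
  · have := norm_sub_le_norm_sub_add_norm_sub x (r • (‖x‖⁻¹ • x)) θ
    rw [hgap, norm_sub_rev (r • _)] at this
    linarith [hx.2]

theorem rpow_add_norm_sub_eq {ε : ℝ} (hε : 0 < ε) (α : ℝ) (x θ : E) :
    (ε + ‖x - θ‖) ^ (-α) = ε ^ (-α) * (1 + ‖ε⁻¹ • (x - θ)‖) ^ (-α) := by
  rw [← mul_rpow hε.le (by positivity), norm_smul, norm_inv, norm_of_nonneg hε.le,
    mul_add, mul_one, mul_inv_cancel_left₀ hε.ne']

theorem indicator_norm_mul_rpow_le {θ : E} (hθ : ‖θ‖ = 1) {α r : ℝ} (hα : 0 ≤ α)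
    (hr0 : 0 ≤ r) (hr1 : r < 1) (x : E) :
    (Ioc r 1).indicator 1 ‖x‖ * ‖θ - r • (‖x‖⁻¹ • x)‖ ^ (-α) ≤
      3 ^ α * ((1 - r) + ‖x - θ‖) ^ (-α) := by
  by_cases hx : ‖x‖ ∈ Ioc r 1
  · have hcmp := (norm_sub_smul_normalize_comparable hθ hr0 hx).2
    have hpos : 0 < ((1 - r) + ‖x - θ‖) / 3 := by positivity
    rw [indicator_of_mem hx, Pi.one_apply, one_mul]
    calc ‖θ - r • (‖x‖⁻¹ • x)‖ ^ (-α) ≤ (((1 - r) + ‖x - θ‖) / 3) ^ (-α) :=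
          rpow_le_rpow_of_nonpos hpos (by linarith) (by linarith)
      _ = 3 ^ α * ((1 - r) + ‖x - θ‖) ^ (-α) := by
          rw [div_rpow (by positivity) (by norm_num), rpow_neg (by norm_num : (0 : ℝ) ≤ 3),
            div_inv_eq_mul, mul_comm]
  · rw [indicator_of_notMem hx, zero_mul]
    positivity

theorem norm_mem_Ioc_of_mem_closedBall {θ x : E} (hθ : ‖θ‖ = 1) {ε : ℝ} (hε0 : 0 < ε)
    (hε2 : ε ≤ 2) (hx : x ∈ closedBall ((1 - ε / 2) • θ) (ε / 4)) :
    ‖x‖ ∈ Ioc (1 - ε) 1 ∧ ‖x - θ‖ ≤ ε := by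
  rw [mem_closedBall, dist_eq_norm] at hx
  have hcenter : ‖(1 - ε / 2) • θ‖ = 1 - ε / 2 := by
    rw [norm_smul, hθ, mul_one, norm_of_nonneg (by linarith)]
  have hshift : ‖(1 - ε / 2) • θ - θ‖ = ε / 2 := by
    rw [show (1 - ε / 2) • θ - θ = (1 - ε / 2 - 1) • θ by module, norm_smul, hθ, mul_one,
    show 1 - ε / 2 - 1 = -(ε / 2) by ring, norm_neg, norm_of_nonneg (by linarith)]
  have habs := abs_norm_sub_norm_le x ((1 - ε / 2) • θ)
  rw [hcenter, abs_le] at habs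
  refine ⟨⟨by linarith, by linarith⟩, ?_⟩
  linarith [norm_sub_le_norm_sub_add_norm_sub x ((1 - ε / 2) • θ) θ]

end Norm

theorem pow_mul_one_sub_le_setIntegral_Ioc_pow (n : ℕ) {r : ℝ} (hr0 : 0 ≤ r) (hr1 : r ≤ 1) :
    r ^ n * (1 - r) ≤ ∫ y in Ioc r 1, y ^ n := by
  simpa [Real.volume_real_Ioc_of_le hr1] using
    setIntegral_ge_of_const_le_real (μ := volume) (s := Ioc r 1) measurableSet_Ioc
      measure_Ioc_lt_top.ne
      (fun y hy ↦ pow_le_pow_left₀ hr0 hy.1.le n) (continuous_pow n).integrableOn_Ioc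

theorem setIntegral_Ioc_pow_le_one_sub (n : ℕ) {r : ℝ} (hr0 : 0 ≤ r) (hr1 : r ≤ 1) :
    ∫ y in Ioc r 1, y ^ n ≤ 1 - r := by
  have := norm_setIntegral_le_of_norm_le_const (μ := volume) (f := fun y : ℝ ↦ y ^ n)
    (C := 1) measure_Ioc_lt_top fun y hy ↦ by
      rw [norm_pow, norm_of_nonneg (hr0.trans hy.1.le)]
      exact pow_le_one₀ (hr0.trans hy.1.le) hy.2
  rw [Real.volume_real_Ioc_of_le hr1, one_mul] at this
  exact (le_abs_self _).trans this

section Polar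

variable {E : Type*} [NormedAddCommGroup E] [NormedSpace ℝ E] [MeasurableSpace E] [BorelSpace E]
  [FiniteDimensional ℝ E] (μ : Measure E) [μ.IsAddHaarMeasure]

theorem integral_fun_norm_mul_fun_normalize [Nontrivial E] (φ : ℝ → ℝ) (g : E → ℝ) :
    ∫ x, φ ‖x‖ * g (‖x‖⁻¹ • x) ∂μ =
      (∫ σ : sphere (0 : E) 1, g σ ∂μ.toSphere) *
        ∫ y in Ioi (0 : ℝ), y ^ (finrank ℝ E - 1) * φ y :=
  calc ∫ x, φ ‖x‖ * g (‖x‖⁻¹ • x) ∂μ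
      = ∫ x : ({0}ᶜ : Set E), φ ‖x.1‖ * g (‖x.1‖⁻¹ • x.1) ∂(μ.comap (↑)) := by
        rw [integral_subtype_comap (measurableSet_singleton _).compl
          fun x ↦ φ ‖x‖ * g (‖x‖⁻¹ • x), restrict_compl_singleton]
    _ = ∫ p, g p.1 * φ p.2 ∂μ.toSphere.prod (.volumeIoiPow (finrank ℝ E - 1)) := by
        simpa [mul_comm] using μ.measurePreserving_homeomorphUnitSphereProd.integral_comp
          (Homeomorph.measurableEmbedding _) fun p ↦ g p.1 * φ p.2
    _ = (∫ σ, g σ ∂μ.toSphere) * ∫ ρ, φ ρ ∂.volumeIoiPow (finrank ℝ E - 1) :=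
        integral_prod_mul (fun σ : sphere (0 : E) 1 ↦ g σ) (fun ρ : Ioi (0 : ℝ) ↦ φ ρ)
    _ = _ := by
      congr 1
      simp only [Measure.volumeIoiPow, ENNReal.ofReal]
      rw [integral_withDensity_eq_integral_smul
          (measurable_subtype_coe.pow_const _).real_toNNReal,
        integral_subtype_comap measurableSet_Ioi fun a ↦ (a ^ (finrank ℝ E - 1)).toNNReal • φ a,
        setIntegral_congr_fun measurableSet_Ioi fun x hx ↦ ?_]
      rw [NNReal.smul_def, Real.coe_toNNReal _ (pow_nonneg (le_of_lt hx) _), smul_eq_mul]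

theorem integral_rpow_add_norm_sub {ε : ℝ} (hε : 0 < ε) (α : ℝ) (θ : E) :
    ∫ x, (ε + ‖x - θ‖) ^ (-α) ∂μ = ε ^ (finrank ℝ E - α) * ∫ x, (1 + ‖x‖) ^ (-α) ∂μ := by
  simp_rw [rpow_add_norm_sub_eq hε α _ θ, integral_const_mul,
    integral_sub_right_eq_self (fun x ↦ (1 + ‖ε⁻¹ • x‖) ^ (-α)) θ,
    Measure.integral_comp_inv_smul_of_nonneg μ (fun x ↦ (1 + ‖x‖) ^ (-α)) hε.le, smul_eq_mul,
    ← mul_assoc, ← rpow_natCast, ← rpow_add hε, neg_add_eq_sub]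

theorem integrable_rpow_add_norm_sub {ε α : ℝ} (hε : 0 < ε) (hα : (finrank ℝ E : ℝ) < α) (θ : E) :
    Integrable (fun x ↦ (ε + ‖x - θ‖) ^ (-α)) μ := by
  refine ((((integrable_one_add_norm hα).comp_smul (inv_ne_zero hε.ne')).comp_sub_right
    θ).const_mul (ε ^ (-α))).congr (.of_forall fun x ↦ ?_)
  exact (rpow_add_norm_sub_eq hε α x θ).symm

end Polar

section SphereRiesz

variable {E : Type*} [NormedAddCommGroup E] [NormedSpace ℝ E] [MeasurableSpace E]

noncomputable def sphereRieszIntegral (μ : Measure E) (α : ℝ) (θ : E) (r : ℝ) : ℝ :=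
  ∫ σ : sphere (0 : E) 1, ‖θ - r • (σ : E)‖ ^ (-α) ∂μ.toSphere

theorem sphereRieszIntegral_nonneg (μ : Measure E) (α : ℝ) (θ : E) (r : ℝ) :
    0 ≤ sphereRieszIntegral μ α θ r :=
  integral_nonneg fun _ ↦ by positivity

variable [BorelSpace E] [FiniteDimensional ℝ E] (μ : Measure E) [μ.IsAddHaarMeasure]
  {α r : ℝ} {θ : E}

theorem integrable_norm_sub_smul_rpow_neg (hθ : ‖θ‖ = 1) (hα : 0 ≤ α) (hr0 : 0 ≤ r)
    (hr1 : r < 1) :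
    Integrable (fun σ : sphere (0 : E) 1 ↦ ‖θ - r • (σ : E)‖ ^ (-α)) μ.toSphere := by
  refine .of_bound (by fun_prop : Measurable _).aestronglyMeasurable ((1 - r) ^ (-α))
    (.of_forall fun σ ↦ ?_)
  have hσ := one_sub_le_norm_sub_smul hθ (norm_eq_of_mem_sphere σ) hr0
  rw [norm_of_nonneg (by positivity)]
  exact rpow_le_rpow_of_nonpos (by linarith) hσ (by linarith)

theorem one_add_rpow_mul_le_sphereRieszIntegral (hθ : ‖θ‖ = 1) (hα : 0 ≤ α) (hr0 : 0 ≤ r)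
    (hr1 : r < 1) :
    (1 + r) ^ (-α) * μ.toSphere.real univ ≤ sphereRieszIntegral μ α θ r := by
  rw [mul_comm, ← smul_eq_mul, ← integral_const]
  refine integral_mono (integrable_const _) (integrable_norm_sub_smul_rpow_neg μ hθ hα hr0 hr1)
    fun σ ↦ ?_
  have hσ := one_sub_le_norm_sub_smul hθ (norm_eq_of_mem_sphere σ) hr0
  exact rpow_le_rpow_of_nonpos (by linarith)
    (norm_sub_smul_le_one_add hθ (norm_eq_of_mem_sphere σ) hr0) (by linarith)

theorem sphereRieszIntegral_le_one_sub_rpow_mul (hθ : ‖θ‖ = 1) (hα : 0 ≤ α) (hr0 : 0 ≤ r)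
    (hr1 : r < 1) :
    sphereRieszIntegral μ α θ r ≤ (1 - r) ^ (-α) * μ.toSphere.real univ := by
  rw [mul_comm, ← smul_eq_mul, ← integral_const]
  refine integral_mono (integrable_norm_sub_smul_rpow_neg μ hθ hα hr0 hr1) (integrable_const _)
    fun σ ↦ ?_
  exact rpow_le_rpow_of_nonpos (by linarith)
    (one_sub_le_norm_sub_smul hθ (norm_eq_of_mem_sphere σ) hr0) (by linarith)

theorem integral_annulus_eq_sphereRieszIntegral_mul [Nontrivial E] (α : ℝ) (θ : E)
    (hr : 0 ≤ r) :
    ∫ x, (Ioc r 1).indicator 1 ‖x‖ * ‖θ - r • (‖x‖⁻¹ • x)‖ ^ (-α) ∂μ =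
      sphereRieszIntegral μ α θ r * ∫ y in Ioc r 1, y ^ (finrank ℝ E - 1) := by
  rw [integral_fun_norm_mul_fun_normalize μ _ fun y ↦ ‖θ - r • y‖ ^ (-α), sphereRieszIntegral]
  congr 1
  rw [← integral_indicator measurableSet_Ioc, ← integral_indicator measurableSet_Ioi]
  congr 1 with y
  by_cases hy : y ∈ Ioc r 1
  · simp [hy, hr.trans_lt hy.1]
  · simp [hy]

theorem pow_mul_sphereRieszIntegral_le_mul_rpow_one_sub [Nontrivial E] (hθ : ‖θ‖ = 1)
    (hα : (finrank ℝ E : ℝ) < α) (hr0 : 0 < r) (hr1 : r < 1) :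
    r ^ (finrank ℝ E - 1) * sphereRieszIntegral μ α θ r ≤
      3 ^ α * (∫ x, (1 + ‖x‖) ^ (-α) ∂μ) * (1 - r) ^ ((finrank ℝ E : ℝ) - 1 - α) := by
  have hε : 0 < 1 - r := by linarith
  have hα0 : 0 ≤ α := (Nat.cast_nonneg _).trans hα.le
  have hI := sphereRieszIntegral_nonneg μ α θ r
  have key : r ^ (finrank ℝ E - 1) * sphereRieszIntegral μ α θ r * (1 - r) ≤
      3 ^ α * (∫ x, (1 + ‖x‖) ^ (-α) ∂μ) * (1 - r) ^ ((finrank ℝ E : ℝ) - α) :=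
    calc r ^ (finrank ℝ E - 1) * sphereRieszIntegral μ α θ r * (1 - r)
        ≤ sphereRieszIntegral μ α θ r * ∫ y in Ioc r 1, y ^ (finrank ℝ E - 1) := by
          rw [mul_comm _ (sphereRieszIntegral μ α θ r), mul_assoc]
          exact mul_le_mul_of_nonneg_left
            (pow_mul_one_sub_le_setIntegral_Ioc_pow _ hr0.le hr1.le) hI
      _ = ∫ x, (Ioc r 1).indicator 1 ‖x‖ * ‖θ - r • (‖x‖⁻¹ • x)‖ ^ (-α) ∂μ :=
          (integral_annulus_eq_sphereRieszIntegral_mul μ α θ hr0.le).symm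
      _ ≤ ∫ x, 3 ^ α * ((1 - r) + ‖x - θ‖) ^ (-α) ∂μ :=
          integral_mono_of_nonneg
            (.of_forall fun x ↦
              mul_nonneg (indicator_nonneg (fun _ _ ↦ zero_le_one) _) (by positivity))
            ((integrable_rpow_add_norm_sub μ hε hα θ).const_mul _)
            (.of_forall (indicator_norm_mul_rpow_le hθ hα0 hr0.le hr1))
      _ = _ := by rw [integral_const_mul, integral_rpow_add_norm_sub μ hε]; ring
  rw [show (finrank ℝ E : ℝ) - 1 - α = (finrank ℝ E - α) - 1 by ring, rpow_sub_one hε.ne',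
    mul_div_assoc', le_div_iff₀ hε]
  exact key

theorem integrable_indicator_norm_mul_rpow (hθ : ‖θ‖ = 1) (hα : (finrank ℝ E : ℝ) < α)
    (hr0 : 0 ≤ r) (hr1 : r < 1) :
    Integrable (fun x ↦ (Ioc r 1).indicator 1 ‖x‖ * ‖θ - r • (‖x‖⁻¹ • x)‖ ^ (-α)) μ := by
  refine .mono' ((integrable_rpow_add_norm_sub μ (sub_pos.mpr hr1) hα θ).const_mul (3 ^ α))
    (((measurable_one.indicator measurableSet_Ioc).comp measurable_norm).mul
      (by fun_prop)).aestronglyMeasurable (.of_forall fun x ↦ ?_)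
  have h0 : 0 ≤ (Ioc r 1).indicator 1 ‖x‖ * ‖θ - r • (‖x‖⁻¹ • x)‖ ^ (-α) :=
    mul_nonneg (indicator_nonneg (fun _ _ ↦ zero_le_one) _) (by positivity)
  rw [norm_of_nonneg h0]
  exact indicator_norm_mul_rpow_le hθ ((Nat.cast_nonneg _).trans hα.le) hr0 hr1 x

theorem rpow_mul_measureReal_ball_le_integral_annulus (hθ : ‖θ‖ = 1)
    (hα : (finrank ℝ E : ℝ) < α) (hr0 : 0 ≤ r) (hr1 : r < 1) :
    (2 * (1 - r)) ^ (-α) * (((1 - r) / 4) ^ finrank ℝ E * μ.real (ball 0 1)) ≤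
      ∫ x, (Ioc r 1).indicator 1 ‖x‖ * ‖θ - r • (‖x‖⁻¹ • x)‖ ^ (-α) ∂μ := by
  set B := closedBall ((1 - (1 - r) / 2) • θ) ((1 - r) / 4)
  have hball (x : E) : B.indicator (fun _ ↦ (2 * (1 - r)) ^ (-α)) x ≤
      (Ioc r 1).indicator 1 ‖x‖ * ‖θ - r • (‖x‖⁻¹ • x)‖ ^ (-α) := by
    by_cases hx : x ∈ B
    · obtain ⟨hxr, hxθ⟩ := norm_mem_Ioc_of_mem_closedBall hθ (by linarith) (by linarith) hx
      rw [sub_sub_cancel] at hxr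
      obtain ⟨hupper, hlower⟩ := norm_sub_smul_normalize_comparable hθ hr0 hxr
      rw [indicator_of_mem hx, indicator_of_mem hxr, Pi.one_apply, one_mul]
      exact rpow_le_rpow_of_nonpos (by linarith [norm_nonneg (x - θ)]) (by linarith)
        (by linarith [(Nat.cast_nonneg (finrank ℝ E) : (0 : ℝ) ≤ _)])
    · rw [indicator_of_notMem hx]
      exact mul_nonneg (indicator_nonneg (fun _ _ ↦ zero_le_one) _) (by positivity)
  have := integral_mono ((integrableOn_const measure_closedBall_lt_top.ne).integrable_indicator
    measurableSet_closedBall) (integrable_indicator_norm_mul_rpow μ hθ hα hr0 hr1) hball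
  rwa [integral_indicator measurableSet_closedBall, setIntegral_const,
    Measure.addHaar_real_closedBall μ _ (by linarith), smul_eq_mul, mul_comm] at this

theorem mul_rpow_one_sub_le_sphereRieszIntegral [Nontrivial E] (hθ : ‖θ‖ = 1)
    (hα : (finrank ℝ E : ℝ) < α) (hr0 : 0 < r) (hr1 : r < 1) :
    μ.real (ball 0 1) / (2 ^ α * 4 ^ finrank ℝ E) * (1 - r) ^ ((finrank ℝ E : ℝ) - 1 - α) ≤
      sphereRieszIntegral μ α θ r := by
  have hε : 0 < 1 - r := by linarith
  have hpow : (1 - r) ^ ((finrank ℝ E : ℝ) - 1 - α) * (1 - r) =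
      (1 - r) ^ (-α) * (1 - r) ^ finrank ℝ E := by
    rw [← rpow_add_one hε.ne', ← rpow_natCast, ← rpow_add hε]
    ring_nf
  refine le_of_mul_le_mul_right ?_ hε
  calc μ.real (ball 0 1) / (2 ^ α * 4 ^ finrank ℝ E) * (1 - r) ^ ((finrank ℝ E : ℝ) - 1 - α) *
        (1 - r)
      = (2 * (1 - r)) ^ (-α) * (((1 - r) / 4) ^ finrank ℝ E * μ.real (ball 0 1)) := by
        rw [mul_assoc, hpow, mul_rpow (by norm_num) hε.le, rpow_neg (by norm_num : (0 : ℝ) ≤ 2),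
          div_pow]
        field_simp
    _ ≤ ∫ x, (Ioc r 1).indicator 1 ‖x‖ * ‖θ - r • (‖x‖⁻¹ • x)‖ ^ (-α) ∂μ :=
        rpow_mul_measureReal_ball_le_integral_annulus μ hθ hα hr0.le hr1
    _ = sphereRieszIntegral μ α θ r * ∫ y in Ioc r 1, y ^ (finrank ℝ E - 1) :=
        integral_annulus_eq_sphereRieszIntegral_mul μ α θ hr0.le
    _ ≤ sphereRieszIntegral μ α θ r * (1 - r) :=
        mul_le_mul_of_nonneg_left (setIntegral_Ioc_pow_le_one_sub _ hr0.le hr1.le)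
          (sphereRieszIntegral_nonneg μ α θ r)

theorem exists_sphereRieszIntegral_near_one [Nontrivial E] (hθ : ‖θ‖ = 1)
    (hα : (finrank ℝ E : ℝ) < α) {r₀ : ℝ} (hr₀ : 0 < r₀) :
    ∃ c₁ c₂ : ℝ, 0 < c₁ ∧ 0 ≤ c₂ ∧ ∀ r : ℝ, r₀ ≤ r → r < 1 →
      c₁ * (1 - r) ^ ((finrank ℝ E : ℝ) - 1 - α) ≤ sphereRieszIntegral μ α θ r ∧
      sphereRieszIntegral μ α θ r ≤ c₂ * (1 - r) ^ ((finrank ℝ E : ℝ) - 1 - α) := by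
  have hball : 0 < μ.real (ball 0 1) :=
    ENNReal.toReal_pos (measure_ball_pos μ 0 one_pos).ne' measure_ball_lt_top.ne
  have hint : 0 ≤ ∫ x, (1 + ‖x‖) ^ (-α) ∂μ := integral_nonneg fun _ ↦ by positivity
  refine ⟨μ.real (ball 0 1) / (2 ^ α * 4 ^ finrank ℝ E),
    (r₀ ^ (finrank ℝ E - 1))⁻¹ * (3 ^ α * ∫ x, (1 + ‖x‖) ^ (-α) ∂μ), by positivity,
    by positivity,
    fun r hr hr1 ↦ ⟨mul_rpow_one_sub_le_sphereRieszIntegral μ hθ hα (hr₀.trans_le hr) hr1, ?_⟩⟩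
  have hpow : r₀ ^ (finrank ℝ E - 1) ≤ r ^ (finrank ℝ E - 1) := pow_le_pow_left₀ hr₀.le hr _
  rw [mul_assoc, le_inv_mul_iff₀ (by positivity)]
  exact (mul_le_mul_of_nonneg_right hpow (sphereRieszIntegral_nonneg μ α θ r)).trans
    (pow_mul_sphereRieszIntegral_le_mul_rpow_one_sub μ hθ hα (hr₀.trans_le hr) hr1)

end SphereRiesz

section InnerProduct

variable {E : Type*} [NormedAddCommGroup E] [InnerProductSpace ℝ E] {θ : E}

theorem norm_sub_smul_sq {σ : E} (hθ : ‖θ‖ = 1) (hσ : ‖σ‖ = 1) (r : ℝ) :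
    ‖θ - r • σ‖ ^ 2 = 1 + r ^ 2 - 2 * r * inner ℝ θ σ := by
  rw [norm_sub_sq_real, inner_smul_right, norm_smul, mul_pow, norm_eq_abs, sq_abs, hθ, hσ]
  ring

theorem norm_smul_sub_eq_norm_sub_smul {σ : E} (hθ : ‖θ‖ = 1) (hσ : ‖σ‖ = 1) (r : ℝ) :
    ‖r • θ - σ‖ = ‖θ - r • σ‖ := by
  rw [← sq_eq_sq₀ (norm_nonneg _) (norm_nonneg _), norm_sub_rev, norm_sub_smul_sq hσ hθ,
    norm_sub_smul_sq hθ hσ, real_inner_comm]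

variable [MeasurableSpace E] (μ : Measure E)

theorem sphereRieszIntegral_eq_integral_rpow (hθ : ‖θ‖ = 1) (α r : ℝ) :
    sphereRieszIntegral μ α θ r =
      ∫ σ : sphere (0 : E) 1, (1 + r ^ 2 - 2 * r * inner ℝ θ (σ : E)) ^ (-α / 2) ∂μ.toSphere := by
  refine integral_congr_ae (.of_forall fun σ ↦ ?_)
  dsimp only
  rw [← norm_sub_smul_sq hθ (norm_eq_of_mem_sphere σ), ← rpow_natCast,
    ← rpow_mul (norm_nonneg _)]
  ring_nf

theorem sphereRieszIntegral_inv (hθ : ‖θ‖ = 1) {r : ℝ} (hr : 0 < r) (α : ℝ) :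
    sphereRieszIntegral μ α θ r⁻¹ = r ^ α * sphereRieszIntegral μ α θ r := by
  rw [sphereRieszIntegral, sphereRieszIntegral, ← integral_const_mul]
  refine integral_congr_ae (.of_forall fun σ ↦ ?_)
  dsimp only
  rw [show θ - r⁻¹ • (σ : E) = r⁻¹ • (r • θ - σ) by
      rw [smul_sub, smul_smul, inv_mul_cancel₀ hr.ne', one_smul],
    norm_smul, norm_inv, norm_of_nonneg hr.le,
    norm_smul_sub_eq_norm_sub_smul hθ (norm_eq_of_mem_sphere σ), mul_rpow (by positivity)
      (norm_nonneg _), inv_rpow hr.le, rpow_neg hr.le, inv_inv]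

end InnerProduct

theorem one_sub_exp_neg_le (t : ℝ) : 1 - exp (-t) ≤ t := by
  linarith [add_one_le_exp (-t)]

theorem half_le_one_sub_exp_neg {t : ℝ} (ht0 : 0 ≤ t) (ht1 : t ≤ 1) : t / 2 ≤ 1 - exp (-t) := by
  have hexp : exp (-t) * (1 + t) ≤ 1 :=
    calc exp (-t) * (1 + t) ≤ exp (-t) * exp t :=
          mul_le_mul_of_nonneg_left (by linarith [add_one_le_exp t]) (exp_pos _).le
      _ = 1 := by rw [← exp_add, neg_add_cancel, exp_zero]
  nlinarith [exp_pos (-t)]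

section HenonKernel

variable {N : ℕ} {s : ℝ} {θ : EuclideanSpace ℝ (Fin N)}

theorem henonKernel_eq (hθ : ‖θ‖ = 1) (t : ℝ) :
    henonKernel N s θ t =
      exp (-t * (N + 2 * s) / 2) * sphereRieszIntegral volume (N + 2 * s) θ (exp (-t)) := by
  rw [henonKernel, sphereRieszIntegral_eq_integral_rpow _ hθ,
    show exp (-2 * t) = exp (-t) ^ 2 by rw [sq, ← exp_add]; ring_nf]

theorem henonKernel_neg (hθ : ‖θ‖ = 1) (t : ℝ) : henonKernel N s θ (-t) = henonKernel N s θ t := by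
  rw [henonKernel_eq hθ, henonKernel_eq hθ, neg_neg, show exp t = (exp (-t))⁻¹ by
      rw [exp_neg, inv_inv], sphereRieszIntegral_inv _ hθ (exp_pos _), ← exp_mul, ← mul_assoc,
    ← exp_add]
  ring_nf

theorem henonKernel_bounds (hθ : ‖θ‖ = 1) (hs : 0 ≤ (N : ℝ) + 2 * s) {t : ℝ} (ht : 0 < t) :
    exp (-t * (N + 2 * s) / 2) * ((1 + exp (-t)) ^ (-((N : ℝ) + 2 * s)) *
        (volume : Measure (EuclideanSpace ℝ (Fin N))).toSphere.real univ) ≤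
      henonKernel N s θ t ∧
    henonKernel N s θ t ≤ exp (-t * (N + 2 * s) / 2) * ((1 - exp (-t)) ^ (-((N : ℝ) + 2 * s)) *
        (volume : Measure (EuclideanSpace ℝ (Fin N))).toSphere.real univ) := by
  have hr1 : exp (-t) < 1 := exp_lt_one_iff.mpr (by linarith)
  rw [henonKernel_eq hθ]
  exact ⟨mul_le_mul_of_nonneg_left
      (one_add_rpow_mul_le_sphereRieszIntegral _ hθ hs (exp_pos _).le hr1) (exp_pos _).le,
    mul_le_mul_of_nonneg_left
      (sphereRieszIntegral_le_one_sub_rpow_mul _ hθ hs (exp_pos _).le hr1) (exp_pos _).le⟩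

theorem nontrivial_euclideanSpace_fin (hN : 0 < N) : Nontrivial (EuclideanSpace ℝ (Fin N)) :=
  Module.nontrivial_of_finrank_pos (by rwa [finrank_euclideanSpace_fin])

theorem volume_toSphere_real_univ_pos (hN : 0 < N) :
    0 < (volume : Measure (EuclideanSpace ℝ (Fin N))).toSphere.real univ := by
  have := nontrivial_euclideanSpace_fin hN
  have : NeZero (volume : Measure (EuclideanSpace ℝ (Fin N))).toSphere :=
    ⟨Measure.toSphere_ne_zero _⟩
  exact measureReal_univ_pos

theorem henonKernel_pos (hN : 0 < N) (hθ : ‖θ‖ = 1) (hs : 0 ≤ (N : ℝ) + 2 * s) {t : ℝ}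
    (ht : 0 < t) : 0 < henonKernel N s θ t :=
  lt_of_lt_of_le (by have := volume_toSphere_real_univ_pos hN; positivity)
    (henonKernel_bounds hθ hs ht).1

theorem exists_henonKernel_far (hN : 0 < N) (hθ : ‖θ‖ = 1) (hs : 0 ≤ (N : ℝ) + 2 * s) :
    ∃ c₁ c₂ : ℝ, 0 < c₁ ∧ ∀ t : ℝ, 1 ≤ t →
      c₁ * exp (-t * (N + 2 * s) / 2) ≤ henonKernel N s θ t ∧
      henonKernel N s θ t ≤ c₂ * exp (-t * (N + 2 * s) / 2) := by
  set M := (volume : Measure (EuclideanSpace ℝ (Fin N))).toSphere.real univ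
  have hM : 0 < M := volume_toSphere_real_univ_pos hN
  refine ⟨2 ^ (-((N : ℝ) + 2 * s)) * M, (1 - exp (-1)) ^ (-((N : ℝ) + 2 * s)) * M,
    by positivity, fun t ht ↦ ?_⟩
  have hr : exp (-t) ≤ exp (-1) := exp_le_exp.mpr (by linarith)
  have hr1 : exp (-1) < 1 := exp_lt_one_iff.mpr (by norm_num)
  have hα : -((N : ℝ) + 2 * s) ≤ 0 := by linarith
  have h2 : (2 : ℝ) ^ (-((N : ℝ) + 2 * s)) ≤ (1 + exp (-t)) ^ (-((N : ℝ) + 2 * s)) :=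
    rpow_le_rpow_of_nonpos (by positivity) (by linarith) hα
  have h3 : (1 - exp (-t)) ^ (-((N : ℝ) + 2 * s)) ≤ (1 - exp (-1)) ^ (-((N : ℝ) + 2 * s)) :=
    rpow_le_rpow_of_nonpos (by linarith) (by linarith) hα
  obtain ⟨hlow, hup⟩ := henonKernel_bounds hθ hs (by linarith : 0 < t)
  constructor
  · refine le_trans ?_ hlow
    rw [mul_comm]
    gcongr
  · refine hup.trans ?_
    rw [mul_comm _ (exp _)]
    gcongr

theorem exists_henonKernel_near (hN : 0 < N) (hθ : ‖θ‖ = 1) (hs : 0 < s) :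
    ∃ c₁ c₂ : ℝ, 0 < c₁ ∧ ∀ t : ℝ, 0 < t → t ≤ 1 →
      c₁ * t ^ (-(1 + 2 * s)) ≤ henonKernel N s θ t ∧
      henonKernel N s θ t ≤ c₂ * t ^ (-(1 + 2 * s)) := by
  have := nontrivial_euclideanSpace_fin hN
  have hdim : finrank ℝ (EuclideanSpace ℝ (Fin N)) = N := finrank_euclideanSpace_fin
  set α : ℝ := N + 2 * s
  obtain ⟨c₁, c₂, hc₁, hc₂, hI⟩ := exists_sphereRieszIntegral_near_one volume hθ
    (by rw [hdim]; linarith : (finrank ℝ (EuclideanSpace ℝ (Fin N)) : ℝ) < α) (exp_pos (-1))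
  rw [hdim, show (N : ℝ) - 1 - α = -(1 + 2 * s) by ring] at hI
  refine ⟨exp (-α / 2) * c₁, c₂ * 2 ^ (1 + 2 * s), by positivity, fun t ht0 ht1 ↦ ?_⟩
  have hα0 : 0 < α := by positivity
  have hneg : -(1 + 2 * s) ≤ 0 := by linarith
  have hgap : t / 2 ≤ 1 - exp (-t) := half_le_one_sub_exp_neg ht0.le ht1
  have hgap' : 1 - exp (-t) ≤ t := one_sub_exp_neg_le t
  obtain ⟨hlow, hup⟩ := hI (exp (-t)) (exp_le_exp.mpr (by linarith))
    (exp_lt_one_iff.mpr (by linarith))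
  rw [henonKernel_eq hθ]
  constructor
  · calc exp (-α / 2) * c₁ * t ^ (-(1 + 2 * s))
        ≤ exp (-t * α / 2) * (c₁ * (1 - exp (-t)) ^ (-(1 + 2 * s))) := by
          rw [mul_assoc]
          gcongr ?_ * (c₁ * ?_)
          · exact exp_le_exp.mpr (by nlinarith)
          · exact rpow_le_rpow_of_nonpos (by linarith) hgap' hneg
      _ ≤ exp (-t * α / 2) * sphereRieszIntegral volume α θ (exp (-t)) := by gcongr
  · calc exp (-t * α / 2) * sphereRieszIntegral volume α θ (exp (-t))
        ≤ sphereRieszIntegral volume α θ (exp (-t)) :=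
          mul_le_of_le_one_left (sphereRieszIntegral_nonneg _ _ _ _)
            (exp_le_one_iff.mpr (by nlinarith))
      _ ≤ c₂ * (t / 2) ^ (-(1 + 2 * s)) := hup.trans (mul_le_mul_of_nonneg_left
          (rpow_le_rpow_of_nonpos (by positivity) hgap hneg) hc₂)
      _ = c₂ * 2 ^ (1 + 2 * s) * t ^ (-(1 + 2 * s)) := by
          rw [div_rpow ht0.le (by norm_num), rpow_neg (by norm_num : (0 : ℝ) ≤ 2), div_inv_eq_mul]
          ring

end HenonKernel

theorem henonKernel_even_pos_asymptotics_general
    (N : ℕ) (hN : 2 ≤ N) (s : ℝ) (hs0 : 0 < s)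
    (θ : EuclideanSpace ℝ (Fin N)) (hθ : ‖θ‖ = 1) :
    (∀ t : ℝ, t ≠ 0 → henonKernel N s θ (-t) = henonKernel N s θ t) ∧
    (∀ t : ℝ, t ≠ 0 → 0 < henonKernel N s θ t) ∧
    ∃ c₁ c₂ : ℝ, 0 < c₁ ∧ c₁ ≤ c₂ ∧
      (∀ t : ℝ, 0 < |t| → |t| ≤ 1 →
        c₁ * |t| ^ (-(1 + 2 * s)) ≤ henonKernel N s θ t ∧
        henonKernel N s θ t ≤ c₂ * |t| ^ (-(1 + 2 * s))) ∧
      (∀ t : ℝ, 1 ≤ |t| →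
        c₁ * Real.exp (-|t| * ((N : ℝ) + 2 * s) / 2) ≤ henonKernel N s θ t ∧
        henonKernel N s θ t ≤ c₂ * Real.exp (-|t| * ((N : ℝ) + 2 * s) / 2)) := by
  have hN0 : 0 < N := by omega
  have hα : 0 ≤ (N : ℝ) + 2 * s := by positivity
  have habs (t : ℝ) : henonKernel N s θ |t| = henonKernel N s θ t := by
    rcases abs_choice t with h | h <;> rw [h]
    exact henonKernel_neg hθ t
  obtain ⟨a₁, a₂, ha₁, hnear⟩ := exists_henonKernel_near hN0 hθ hs0
  obtain ⟨b₁, b₂, hb₁, hfar⟩ := exists_henonKernel_far hN0 hθ hα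
  have hc₁ : min a₁ b₁ ≤ a₁ ∧ min a₁ b₁ ≤ b₁ := ⟨min_le_left _ _, min_le_right _ _⟩
  have hc₂ : a₂ ≤ max (max a₂ b₂) (min a₁ b₁) ∧ b₂ ≤ max (max a₂ b₂) (min a₁ b₁) :=
    ⟨(le_max_left _ _).trans (le_max_left _ _), (le_max_right _ _).trans (le_max_left _ _)⟩
  refine ⟨fun t _ ↦ henonKernel_neg hθ t,
    fun t ht ↦ habs t ▸ henonKernel_pos hN0 hθ hα (abs_pos.mpr ht),
    min a₁ b₁, max (max a₂ b₂) (min a₁ b₁), lt_min ha₁ hb₁, le_max_right _ _,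
    fun t h0 h1 ↦ ?_, fun t h1 ↦ ?_⟩
  · obtain ⟨hl, hu⟩ := habs t ▸ hnear |t| h0 h1
    exact ⟨le_trans (by gcongr; exact hc₁.1) hl, hu.trans (by gcongr; exact hc₂.1)⟩
  · obtain ⟨hl, hu⟩ := habs t ▸ hfar |t| h1
    exact ⟨le_trans (by gcongr; exact hc₁.2) hl, hu.trans (by gcongr; exact hc₂.2)⟩

/-- **Properties of the kernel** (Proposition 4.1): `K` is even and strictly positive,
behaves like `|t|^{-(1+2s)}` near the origin and like `e^{-|t|(N+2s)/2}` at infinity. -/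
theorem henonKernel_even_pos_asymptotics
    (N : ℕ) (hN : 2 ≤ N) (s : ℝ) (hs0 : 0 < s) (hs1 : s < 1)
    (hNs : 2 * s < (N : ℝ))
    (θ : EuclideanSpace ℝ (Fin N)) (hθ : ‖θ‖ = 1) :
    (∀ t : ℝ, t ≠ 0 → henonKernel N s θ (-t) = henonKernel N s θ t) ∧
    (∀ t : ℝ, t ≠ 0 → 0 < henonKernel N s θ t) ∧
    ∃ c₁ c₂ : ℝ, 0 < c₁ ∧ c₁ ≤ c₂ ∧
      (∀ t : ℝ, 0 < |t| → |t| ≤ 1 →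
        c₁ * |t| ^ (-(1 + 2 * s)) ≤ henonKernel N s θ t ∧
        henonKernel N s θ t ≤ c₂ * |t| ^ (-(1 + 2 * s))) ∧
      (∀ t : ℝ, 1 ≤ |t| →
        c₁ * Real.exp (-|t| * ((N : ℝ) + 2 * s) / 2) ≤ henonKernel N s θ t ∧
        henonKernel N s θ t ≤ c₂ * Real.exp (-|t| * ((N : ℝ) + 2 * s) / 2)) :=
  henonKernel_even_pos_asymptotics_general N hN s hs0 θ hθ
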